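/- arXiv:1407.8217 — 2 statements merged into one kernel-verified Lean document; each statement's English description precedes it below -/
import Mathlib

section
/- Fix a constant α with 0 < α ≤ 1. Then lim_{n→∞} (1 + 2^{(αn-2)/(αn)} - 2^{(αn-1)/(αn)})^n = 4^{-1/α}. -/
/-!
With `u = (α n)⁻¹` the base is `1 + φ u`, where `φ x = 2 ^ (1 - 2x) - 2 ^ (1 - x)` vanishes at `0`
with `φ'(0) = -2 log 2`. Hence `n (base - 1) → -2 log 2 / α`, and `(1 + xₙ) ^ n → exp (lim n xₙ)`
gives the limit `exp (-2 log 2 / α) = 4 ^ (-1 / α)`.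
-/

open Filter Topology Real

theorem Filter.Tendsto.mul_comp_of_hasDerivAt_zero {ι : Type*} {l : Filter ι} {g : ℝ → ℝ}
    {d a : ℝ} {u v : ι → ℝ} (hg : HasDerivAt g d 0) (hg0 : g 0 = 0)
    (hu : Tendsto u l (𝓝[≠] 0)) (hvu : Tendsto (fun i => v i * u i) l (𝓝 a)) :
    Tendsto (fun i => v i * g (u i)) l (𝓝 (a * d)) := by
  refine (hvu.mul ((hasDerivAt_iff_tendsto_slope.mp hg).comp hu)).congr' ?_
  filter_upwards [hu self_mem_nhdsWithin] with i (hi : u i ≠ 0)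
  simp only [Function.comp_apply, slope_def_field, hg0, sub_zero]
  field_simp

theorem hasDerivAt_two_rpow_one_sub_two_mul_sub_two_rpow_one_sub :
    HasDerivAt (fun x : ℝ => (2 : ℝ) ^ (1 - 2 * x) - (2 : ℝ) ^ (1 - x)) (-2 * log 2) 0 := by
  have h₁ : HasDerivAt (fun x : ℝ => 1 - 2 * x) (-2) 0 := by
    simpa using ((hasDerivAt_id (0 : ℝ)).const_mul 2).const_sub 1
  have h₂ : HasDerivAt (fun x : ℝ => 1 - x) (-1) 0 := by
    simpa using (hasDerivAt_id (0 : ℝ)).const_sub 1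
  exact ((h₁.const_rpow two_pos).sub (h₂.const_rpow two_pos)).congr_deriv (by norm_num; ring)

theorem tendsto_inv_const_mul_natCast_nhdsNE_zero {α : ℝ} (hα : 0 < α) :
    Tendsto (fun n : ℕ => (α * n)⁻¹) atTop (𝓝[≠] 0) :=
  tendsto_nhdsWithin_mono_right (fun _ hx => ne_of_gt hx) <|
    tendsto_inv_atTop_nhdsGT_zero.comp <|
      tendsto_natCast_atTop_atTop.const_mul_atTop hα

theorem stmt_7_general (α : ℝ) (hα0 : 0 < α) :
    Tendsto
      (fun n : ℕ =>
        (1 + (2 : ℝ) ^ ((α * n - 2) / (α * n)) - (2 : ℝ) ^ ((α * n - 1) / (α * n))) ^ n)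
      atTop (nhds ((4 : ℝ) ^ (-1 / α))) := by
  have hscale : Tendsto (fun n : ℕ => (n : ℝ) * (α * n)⁻¹) atTop (𝓝 α⁻¹) := by
    refine tendsto_const_nhds.congr' ?_
    filter_upwards [eventually_ne_atTop 0] with n hn
    field_simp
  have hlim := Real.tendsto_one_add_pow_exp_of_tendsto <|
    (tendsto_inv_const_mul_natCast_nhdsNE_zero hα0).mul_comp_of_hasDerivAt_zero
      hasDerivAt_two_rpow_one_sub_two_mul_sub_two_rpow_one_sub (by norm_num) hscale
  have hexp : exp (α⁻¹ * (-2 * log 2)) = (4 : ℝ) ^ (-1 / α) := by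
    rw [rpow_def_of_pos (by norm_num), show (4 : ℝ) = 2 ^ 2 by norm_num, log_pow]
    ring_nf
  rw [← hexp]
  refine hlim.congr' ?_
  filter_upwards [eventually_ne_atTop 0] with n hn
  have hαn : α * n ≠ 0 := by positivity
  rw [show (α * n - 2) / (α * n) = 1 - 2 * (α * n)⁻¹ by field_simp,
    show (α * n - 1) / (α * n) = 1 - (α * n)⁻¹ by field_simp]
  ring

theorem stmt_7 (α : ℝ) (hα0 : 0 < α) (hα1 : α ≤ 1) :
    Tendsto
      (fun n : ℕ =>
        (1 + (2 : ℝ) ^ ((α * n - 2) / (α * n)) - (2 : ℝ) ^ ((α * n - 1) / (α * n))) ^ n)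
      atTop (nhds ((4 : ℝ) ^ (-1 / α))) :=
  stmt_7_general α hα0
end

section
/- Fix 0 < α ≤ 1 and let f(n) = (1 + 2^{1 - 2/(αn)} - 2^{1 - 1/(αn)})^n for natural n ≥ 1. Then f(n) ≥ 4^{-1/α} for all n ≥ 1. -/
theorem stmt_8 (α : ℝ) (hα0 : 0 < α) (hα1 : α ≤ 1) (n : ℕ) (hn : 1 ≤ n) :
    (4 : ℝ) ^ (-1 / α) ≤
      (1 + (2 : ℝ) ^ (1 - 2 / (α * n)) - (2 : ℝ) ^ (1 - 1 / (α * n))) ^ n := by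
  have hn0 : (0:ℝ) < n := by exact_mod_cast Nat.lt_of_lt_of_le Nat.zero_lt_one hn
  have hαn : (0:ℝ) < α * n := by positivity
  set x : ℝ := (2:ℝ) ^ (-(1/(α*n))) with hxdef
  have hx0 : 0 < x := Real.rpow_pos_of_pos (by norm_num) _
  have h1 : (2:ℝ) ^ ((1:ℝ) - 1/(α*n)) = 2 * x := by
    rw [show (1:ℝ) - 1/(α*n) = 1 + (-(1/(α*n))) by ring,
      Real.rpow_add (by norm_num : (0:ℝ) < 2), Real.rpow_one]
  have h2 : (2:ℝ) ^ ((1:ℝ) - 2/(α*n)) = 2 * (x*x) := by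
    rw [show (1:ℝ) - 2/(α*n) = 1 + (-(1/(α*n))) + (-(1/(α*n))) by ring,
      Real.rpow_add (by norm_num : (0:ℝ) < 2),
      Real.rpow_add (by norm_num : (0:ℝ) < 2), Real.rpow_one]
    ring
  have hbase : 1 + (2:ℝ) ^ ((1:ℝ) - 2/(α*n)) - (2:ℝ) ^ ((1:ℝ) - 1/(α*n))
      = 1 - 2*x + 2*(x*x) := by rw [h1, h2]; ring
  have hxx : x*x = (2:ℝ) ^ (-(2/(α*n))) := by
    rw [hxdef, ← Real.rpow_add (by norm_num : (0:ℝ) < 2)]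
    congr 1; ring
  have hrhs : (x*x) ^ n = (4:ℝ) ^ (-1/α) := by
    rw [← Real.rpow_natCast (x*x) n, hxx,
      ← Real.rpow_mul (by norm_num : (0:ℝ) ≤ 2),
      show (4:ℝ) = (2:ℝ) ^ (2:ℝ) by
        rw [show (2:ℝ) = ((2:ℕ):ℝ) by norm_num, Real.rpow_natCast]; norm_num,
      ← Real.rpow_mul (by norm_num : (0:ℝ) ≤ 2)]
    congr 1
    field_simp
  have hkey : x*x ≤ 1 - 2*x + 2*(x*x) := by nlinarith [sq_nonneg (1-x)]
  calc (4:ℝ) ^ (-1/α) = (x*x) ^ n := hrhs.symm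
    _ ≤ (1 - 2*x + 2*(x*x)) ^ n := pow_le_pow_left₀ (by positivity) hkey n
    _ = _ := by rw [hbase]
end
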